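/- arXiv:2012.15594 — 3 statements merged into one kernel-verified Lean document; each statement's English description precedes it below -/
import Mathlib

section
/- Every factor of length 2^{i+3} − 2 of the infinite Fibonacci word u contains an occurrence of the word u^{(i+3)} = ρ^{i+2}(a), for every i ≥ 0. (In particular, every factor of length 6 contains ρ(a) = ab.) -/
def rho (w : List Bool) : List Bool := w.flatMap (fun c => if c then [true, false] else [true])

def ufib : ℕ → List Bool
  | 0 => [true]
  | n + 1 => rho (ufib n)

def uinf (n : ℕ) : Bool := (ufib n).getD n true

/-! With `a = true` and `b = false`: a suffix of `ρ(w)` is `ρ` of a suffix of `w`, up to one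
letter in front, so every factor of length `2m + 2` of `ρ(w)` contains `ρ(x)` for a factor `x`
of `w` of length `m`. As `2^{i+4} - 2 = 2 (2^{i+3} - 2) + 2` and `ρ(u^{(i+3)}) = u^{(i+4)}`,
induction on `i` reduces the theorem to `i = 0`. There one uses that `bb` is not a factor of
any `ρ(w)` and `aaa` is not a factor of `ρ(w)` when `bb` is not a factor of `w`; every word of
length 5 avoiding both contains `aba = u^{(3)}`. -/

@[simp] theorem rho_nil : rho [] = [] := rfl

@[simp] theorem rho_cons_true (w : List Bool) : rho (true :: w) = true :: false :: rho w := rfl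

@[simp] theorem rho_cons_false (w : List Bool) : rho (false :: w) = true :: rho w := rfl

theorem length_rho (w : List Bool) : (rho w).length = w.length + w.count true := by
  induction w with
  | nil => rfl
  | cons c w ih => cases c <;> simp [ih] <;> omega

theorem length_rho_le (w : List Bool) : (rho w).length ≤ 2 * w.length := by
  have := w.count_le_length (a := true)
  rw [length_rho]; omega

theorem List.IsPrefix.rho {v w : List Bool} (h : v <+: w) : rho v <+: rho w :=
  h.flatMap _

theorem List.IsInfix.rho {v w : List Bool} (h : v <:+: w) : rho v <:+: rho w :=
  h.flatMap _

theorem exists_suffix_eq_append_rho_of_suffix_rho {t w : List Bool} (h : t <:+ rho w) :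
    ∃ r w', w' <:+ w ∧ r.length ≤ 1 ∧ t = r ++ rho w' := by
  induction w with
  | nil => exact ⟨[], [], List.suffix_refl _, by simp, by simpa using h⟩
  | cons c w ih =>
    have lift : ∀ {w'}, w' <:+ w → w' <:+ c :: w := fun hw => hw.trans (List.suffix_cons c w)
    have whole : t = rho (c :: w) →
        ∃ r w', w' <:+ c :: w ∧ r.length ≤ 1 ∧ t = r ++ rho w' :=
      fun ht => ⟨[], _, List.suffix_refl _, by simp, ht⟩
    have inner : t <:+ rho w →
        ∃ r w', w' <:+ c :: w ∧ r.length ≤ 1 ∧ t = r ++ rho w' := by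
      intro ht
      obtain ⟨r, w', hw, hr, rfl⟩ := ih ht
      exact ⟨r, w', lift hw, hr, rfl⟩
    cases c
    · rcases List.suffix_cons_iff.1 h with ht | ht
      exacts [whole ht, inner ht]
    · rcases List.suffix_cons_iff.1 h with ht | ht
      · exact whole ht
      rcases List.suffix_cons_iff.1 ht with rfl | ht
      exacts [⟨[false], w, lift (List.suffix_refl _), by simp, rfl⟩, inner ht]

theorem exists_infix_rho_infix_of_infix_rho {v w : List Bool} (h : v <:+: rho w) (m : ℕ)
    (hv : 2 * m + 2 ≤ v.length) : ∃ x, x <:+: w ∧ x.length = m ∧ rho x <:+: v := by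
  obtain ⟨t, hvt, htw⟩ := List.infix_iff_prefix_suffix.1 h
  obtain ⟨r, w', hw', hr, rfl⟩ := exists_suffix_eq_append_rho_of_suffix_rho htw
  have hm : m ≤ w'.length := by
    have : v.length ≤ r.length + (rho w').length := by simpa using hvt.length_le
    have := length_rho_le w'
    omega
  refine ⟨w'.take m, (w'.take_prefix m).isInfix.trans hw'.isInfix, by simp [hm], ?_⟩
  have hpre : r ++ rho (w'.take m) <+: r ++ rho w' :=
    (List.prefix_append_right_inj r).2 (w'.take_prefix m).rho
  have hlen : (r ++ rho (w'.take m)).length ≤ v.length := by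
    have := length_rho_le (w'.take m)
    simp only [List.length_append, List.length_take] at *
    omega
  exact (List.suffix_append r _).isInfix.trans
    (List.prefix_of_prefix_length_le hpre hvt hlen).isInfix

theorem ufib_prefix_ufib_succ (n : ℕ) : ufib n <+: ufib (n + 1) := by
  induction n with
  | zero => exact ⟨[false], rfl⟩
  | succ n ih => exact ih.rho

theorem ufib_prefix_ufib {m n : ℕ} (h : m ≤ n) : ufib m <+: ufib n := by
  induction n, h using Nat.le_induction with
  | base => exact List.prefix_refl _
  | succ n _ ih => exact ih.trans (ufib_prefix_ufib_succ n)

theorem lt_length_ufib (n : ℕ) : n < (ufib n).length := by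
  induction n with
  | zero => simp [ufib]
  | succ n ih =>
    have : true ∈ ufib n := (ufib_prefix_ufib (Nat.zero_le n)).subset (by simp [ufib])
    have := List.count_pos_iff.2 this
    change n + 1 < (rho (ufib n)).length
    rw [length_rho]; omega

theorem uinf_eq_getElem_ufib {n N : ℕ} (h : n ≤ N) (hN : n < (ufib N).length) :
    uinf n = (ufib N)[n] := by
  rw [uinf, List.getD_eq_getElem _ _ (lt_length_ufib n)]
  exact (ufib_prefix_ufib h).getElem _

theorem not_false_false_infix_rho (w : List Bool) : ¬ [false, false] <:+: rho w := by
  induction w with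
  | nil => simp
  | cons c w ih =>
    cases c
    · simpa [List.infix_cons_iff] using ih
    · cases w with
      | nil => simp [List.infix_cons_iff]
      | cons d w => cases d <;> simp_all [List.infix_cons_iff]

theorem not_true_true_true_infix_rho {w : List Bool} (hw : ¬ [false, false] <:+: w) :
    ¬ [true, true, true] <:+: rho w := by
  induction w with
  | nil => simp
  | cons c w ih =>
    have ih := ih fun h => hw (h.trans (List.suffix_cons c w).isInfix)
    cases c
    · cases w with
      | nil => simp [List.infix_cons_iff]
      | cons d w => cases d <;> simp_all [List.infix_cons_iff]
    · simp_all [List.infix_cons_iff]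

theorem not_false_false_infix_ufib (n : ℕ) : ¬ [false, false] <:+: ufib n := by
  cases n with
  | zero => decide
  | succ n => exact not_false_false_infix_rho (ufib n)

theorem not_true_true_true_infix_ufib (n : ℕ) : ¬ [true, true, true] <:+: ufib n := by
  cases n with
  | zero => decide
  | succ n => exact not_true_true_true_infix_rho (not_false_false_infix_ufib n)

theorem ufib_two_infix_of_infix_ufib {v : List Bool} {N : ℕ} (hv : v <:+: ufib N)
    (hlen : 5 ≤ v.length) : ufib 2 <:+: v := by
  obtain ⟨a, b, c, d, e, s, rfl⟩ : ∃ a b c d e s, v = [a, b, c, d, e] ++ s := by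
    match v, hlen with
    | a :: b :: c :: d :: e :: s, _ => exact ⟨a, b, c, d, e, s, rfl⟩
  have hv : [a, b, c, d, e] <:+: ufib N := List.infix_append_left.trans hv
  have five : ∀ a b c d e : Bool,
      ¬ [false, false] <:+: [a, b, c, d, e] → ¬ [true, true, true] <:+: [a, b, c, d, e] →
        [true, false, true] <:+: [a, b, c, d, e] := by
    decide
  exact (five a b c d e (fun h => not_false_false_infix_ufib N (h.trans hv))
    (fun h => not_true_true_true_infix_ufib N (h.trans hv))).trans List.infix_append_left

theorem ufib_infix_of_infix_ufib (i : ℕ) {v : List Bool} {N : ℕ} (hv : v <:+: ufib N)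
    (hlen : 2 ^ (i + 3) ≤ v.length + 2) : ufib (i + 2) <:+: v := by
  induction i generalizing v N with
  | zero =>
    simp only [zero_add, Nat.reducePow] at hlen
    exact ufib_two_infix_of_infix_ufib hv (by omega)
  | succ i ih =>
    have hpow : 2 ^ (i + 1 + 3) = 2 * 2 ^ (i + 3) := by ring
    have : 2 ≤ 2 ^ (i + 3) := Nat.le_self_pow (by omega) 2
    cases N with
    | zero =>
      have : v.length ≤ 1 := hv.length_le
      omega
    | succ N =>
      obtain ⟨x, hx, hxlen, hxv⟩ :=
        exists_infix_rho_infix_of_infix_rho hv (2 ^ (i + 3) - 2) (by omega)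
      exact (ih hx (by omega)).rho.trans hxv

theorem ofFn_uinf_eq_take_drop_ufib (k L : ℕ) :
    List.ofFn (fun j : Fin L => uinf (k + j)) = ((ufib (k + L)).drop k).take L := by
  have hlen : k + L ≤ (ufib (k + L)).length := (lt_length_ufib (k + L)).le
  apply List.ext_getElem
  · simp only [List.length_ofFn, List.length_take, List.length_drop]
    omega
  · intro j hj _
    simp only [List.length_ofFn] at hj
    simp only [List.getElem_ofFn, List.getElem_take, List.getElem_drop]
    exact uinf_eq_getElem_ufib (by omega) _

/-- Every factor of length 2^{i+3} − 2 of the infinite Fibonacci word contains an occurrence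
of the word u^{(i+3)} = ρ^{i+2}(a) (here `ufib (i+2)`), for every i ≥ 0. -/
theorem factor_contains_ufib (i k : ℕ) :
    ufib (i + 2) <:+: List.ofFn (fun j : Fin (2 ^ (i + 3) - 2) => uinf (k + (j : ℕ))) := by
  have hfactor : List.ofFn (fun j : Fin (2 ^ (i + 3) - 2) => uinf (k + (j : ℕ))) <:+:
      ufib (k + (2 ^ (i + 3) - 2)) := by
    rw [ofFn_uinf_eq_take_drop_ufib]
    exact (List.take_prefix _ _).isInfix.trans (List.drop_suffix _ _).isInfix
  have : 2 ≤ 2 ^ (i + 3) := Nat.le_self_pow (by omega) 2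
  exact ufib_infix_of_infix_ufib i hfactor (by rw [List.length_ofFn]; omega)
end

section
/- For x ≥ 0 not covered by the initial interval [0,τ), there exist finitely many positive integers n₁ > n₂ > ⋯ > n_r ≥ 1 such that 0 ≤ x − τ^{n₁} − τ^{n₂} − ⋯ − τ^{n_r} < τ, where τ = (1+√5)/2 (a greedy Zeckendorf-type expansion in powers of τ). -/
noncomputable def tau : ℝ := (1 + Real.sqrt 5) / 2

/-!
Greedy expansion: take the largest power `q ^ (n + 1)` not exceeding `x` and expand the rest.
The rest stays below `q ^ n`, since `q ^ (n + 2) - q ^ (n + 1) ≤ q ^ n` whenever `q ^ 2 ≤ q + 1`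
(with equality for the golden ratio), so the exponents strictly decrease. Below `q` nothing
needs to be subtracted, and the expansion is non-empty as soon as `x ≥ q`.
-/

theorem exists_greedy_pow_expansion_of_lt_pow {q : ℝ} (hq₁ : 1 ≤ q) (hq : q ^ 2 ≤ q + 1)
    (n : ℕ) {x : ℝ} (hx₀ : 0 ≤ x) (hx : x < q ^ (n + 1)) :
    ∃ l : List ℕ, l.IsChain (· > ·) ∧ (∀ m ∈ l, 1 ≤ m ∧ m ≤ n) ∧
      0 ≤ x - (l.map (q ^ ·)).sum ∧ x - (l.map (q ^ ·)).sum < q := by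
  induction n generalizing x with
  | zero => exact ⟨[], .nil, by simp, by simpa using hx₀, by simpa using hx⟩
  | succ n ih =>
    by_cases hlt : x < q ^ (n + 1)
    · obtain ⟨l, hchain, hbound, hrem⟩ := ih hx₀ hlt
      exact ⟨l, hchain, fun m hm => ⟨(hbound m hm).1, Nat.le_succ_of_le (hbound m hm).2⟩, hrem⟩
    · have hstep : q ^ (n + 2) ≤ q ^ (n + 1) + q ^ n := by
        calc q ^ (n + 2) = q ^ n * q ^ 2 := by ring
          _ ≤ q ^ n * (q + 1) := by gcongr
          _ = q ^ (n + 1) + q ^ n := by ring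
      have hmono : q ^ n ≤ q ^ (n + 1) := pow_le_pow_right₀ hq₁ n.le_succ
      obtain ⟨l, hchain, hbound, hrem⟩ :=
        ih (x := x - q ^ (n + 1)) (by linarith) (by linarith)
      refine ⟨(n + 1) :: l, hchain.cons fun m hm => ?_, fun m hm => ?_, ?_⟩
      · have := (hbound m (List.mem_of_mem_head? hm)).2
        omega
      · rcases List.mem_cons.mp hm with rfl | hm
        · omega
        · exact ⟨(hbound m hm).1, Nat.le_succ_of_le (hbound m hm).2⟩
      · simpa only [List.map_cons, List.sum_cons, sub_add_eq_sub_sub] using hrem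

/-- Greedy Zeckendorf-type expansion in powers of τ: every x ≥ τ admits strictly decreasing
positive integer exponents n₁ > ⋯ > n_r ≥ 1 with 0 ≤ x − τ^{n₁} − ⋯ − τ^{n_r} < τ. -/
theorem greedy_tau_expansion (x : ℝ) (hx : tau ≤ x) :
    ∃ l : List ℕ, l ≠ [] ∧ l.Chain' (· > ·) ∧ (∀ m ∈ l, 1 ≤ m) ∧
      0 ≤ x - (l.map (fun m => tau ^ m)).sum ∧
      x - (l.map (fun m => tau ^ m)).sum < tau := by
  rw [show tau = Real.goldenRatio from rfl] at hx ⊢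
  have hq₁ := Real.one_lt_goldenRatio
  obtain ⟨n, hn⟩ := pow_unbounded_of_one_lt x hq₁
  have hxn : x < Real.goldenRatio ^ (n + 1) := hn.trans_le (pow_le_pow_right₀ hq₁.le n.le_succ)
  obtain ⟨l, hchain, hbound, hrem_nonneg, hrem_lt⟩ := exists_greedy_pow_expansion_of_lt_pow
    hq₁.le Real.goldenRatio_sq.le n (by linarith) hxn
  refine ⟨l, ?_, hchain, fun m hm => (hbound m hm).1, hrem_nonneg, hrem_lt⟩
  rintro rfl
  simp only [List.map_nil, List.sum_nil, sub_zero] at hrem_lt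
  exact hrem_lt.not_ge hx
end

section
/- Let V be C² near each of its local maxima with V''(p) = ζ''(0) < 0 at each maximum p, and suppose λ > −4/ζ''(0). If u ∈ ℝ^ℤ is an equilibrium configuration for H_λ(ξ,η) = ½(ξ−η)² + λV(ξ) (i.e., u_{i+1} − 2u_i + u_{i-1} = λ V'(u_i) for all i) with some u_{i₀} in the strictly quadratic part of V near a maximum g(i₀) and u_{i₀} ≠ g(i₀), then writing ū = (u_{i₀−1} + u_{i₀+1})/2, the sign of u_{i₀} − g(i₀) is opposite to the sign of ū − g(i₀), and |u_{i₀} − g(i₀)| < |ū − g(i₀)| < |ū − u_{i₀}|. -/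
/-! At the site i₀ the equilibrium equation reads ū − u_{i₀} = (λc/2)(u_{i₀} − g₀), so with
t = λc/2 < −2 and d = u_{i₀} − g₀ we get ū − g₀ = (1 + t) d and ū − u_{i₀} = t d.
Since 1 + t < −1, the claims follow from |d| < |1 + t| |d| < |t| |d|. -/

lemma midpoint_sub_eq_of_second_difference {a b x g s : ℝ}
    (h : b - 2 * x + a = s * (x - g)) :
    (a + b) / 2 - g = (1 + s / 2) * (x - g) ∧ (a + b) / 2 - x = s / 2 * (x - g) := by
  constructor <;> linear_combination h / 2

lemma sign_and_abs_lt_of_lt_neg_two {t d : ℝ} (ht : t < -2) (hd : d ≠ 0) :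
    d * ((1 + t) * d) < 0 ∧ |d| < |(1 + t) * d| ∧ |(1 + t) * d| < |t * d| := by
  have hd' : 0 < |d| := abs_pos.mpr hd
  have h1 : |1 + t| = -(1 + t) := abs_of_neg (by linarith)
  have h2 : |t| = -t := abs_of_neg (by linarith)
  refine ⟨?_, ?_, ?_⟩
  · have : d * ((1 + t) * d) = (1 + t) * d ^ 2 := by ring
    rw [this]
    exact mul_neg_of_neg_of_pos (by linarith) (by positivity)
  · rw [abs_mul, h1]
    exact lt_mul_of_one_lt_left hd' (by linarith)
  · rw [abs_mul, abs_mul, h1, h2]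
    exact mul_lt_mul_of_pos_right (by linarith) hd'

/-- Near a local maximum g₀ of V where V'(u_{i₀}) = c·(u_{i₀} − g₀) with c = ζ''(0) < 0, if
λ > −4/c and u is an equilibrium configuration for H_λ with u_{i₀} ≠ g₀, then with
ū = (u_{i₀−1} + u_{i₀+1})/2 the signs of u_{i₀} − g₀ and ū − g₀ are opposite, and
|u_{i₀} − g₀| < |ū − g₀| < |ū − u_{i₀}|. -/
theorem nonminimal_inequalities (c lam : ℝ) (hc : c < 0) (hlam : lam > -4 / c)
    (V' : ℝ → ℝ) (u : ℤ → ℝ) (i₀ : ℤ) (g0 : ℝ)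
    (heq : ∀ i : ℤ, u (i + 1) - 2 * u i + u (i - 1) = lam * V' (u i))
    (hTaylor : V' (u i₀) = c * (u i₀ - g0))
    (hne : u i₀ ≠ g0) :
    (u i₀ - g0) * ((u (i₀ - 1) + u (i₀ + 1)) / 2 - g0) < 0 ∧
    |u i₀ - g0| < |(u (i₀ - 1) + u (i₀ + 1)) / 2 - g0| ∧
    |(u (i₀ - 1) + u (i₀ + 1)) / 2 - g0| < |(u (i₀ - 1) + u (i₀ + 1)) / 2 - u i₀| := by
  have hsite : u (i₀ + 1) - 2 * u i₀ + u (i₀ - 1) = lam * c * (u i₀ - g0) := by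
    rw [heq i₀, hTaylor, mul_assoc]
  obtain ⟨hmid, hdiff⟩ := midpoint_sub_eq_of_second_difference hsite
  rw [hmid, hdiff]
  have ht : lam * c / 2 < -2 := by linarith [(div_lt_iff_of_neg hc).1 hlam]
  exact sign_and_abs_lt_of_lt_neg_two ht (sub_ne_zero.mpr hne)
end
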